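/- For independent Poisson random variables Y_1, …, Y_N with means μ_i > 0 and bounded functions h_i : ℕ^N → ℝ, the 'optimism' E[∑_i Y_i h_i(Y)] − E[∑_i μ_i h_i(Y)] equals E[∑_i Y_i (h_i(Y) − h_i(Y^{(Y_i−1)}))], and if each h_i is coordinatewise nondecreasing in the i-th argument, this optimism is nonnegative. -/

import Mathlib

/-!
Stein's identity for the Poisson law, `E[Y f(Y - 1)] = μ E[f(Y)]`, comes from
`(k + 1) p_μ(k + 1) = μ p_μ(k)`: the shift `y ↦ y + eᵢ` turns `yᵢ F(y - eᵢ) w(y)` into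
`μᵢ F(y) w(y)`, and terms with `yᵢ = 0` vanish. Applied coordinatewise with `F = hᵢ`, it turns
`E[μᵢ hᵢ(Y)]` into `E[Yᵢ hᵢ(Y - eᵢ)]`, which gives the identity; the summands are then pointwise
nonnegative when each `hᵢ` is nondecreasing in its own coordinate.
-/

open scoped BigOperators

noncomputable def poissonPMF (μ : ℝ) (k : ℕ) : ℝ :=
  Real.exp (-μ) * μ ^ k / (Nat.factorial k)

noncomputable def poissonWeight {N : ℕ} (μ : Fin N → ℝ) (y : Fin N → ℕ) : ℝ :=
  ∏ i, poissonPMF (μ i) (y i)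

open Function Finset

lemma poissonPMF_nonneg {μ : ℝ} (hμ : 0 ≤ μ) (k : ℕ) : 0 ≤ poissonPMF μ k := by
  unfold poissonPMF; positivity

lemma summable_poissonPMF (μ : ℝ) : Summable (poissonPMF μ) := by
  refine ((Real.summable_pow_div_factorial μ).mul_left (Real.exp (-μ))).congr fun k => ?_
  simp [poissonPMF, mul_div_assoc]

lemma succ_mul_poissonPMF_succ (μ : ℝ) (k : ℕ) :
    ((k : ℝ) + 1) * poissonPMF μ (k + 1) = μ * poissonPMF μ k := by
  have hk : (k.factorial : ℝ) ≠ 0 := Nat.cast_ne_zero.2 k.factorial_ne_zero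
  unfold poissonPMF
  rw [Nat.factorial_succ, pow_succ]
  push_cast
  field_simp

lemma summable_fin_prod_of_nonneg {β : Type*} : ∀ {N : ℕ} (g : Fin N → β → ℝ),
    (∀ i b, 0 ≤ g i b) → (∀ i, Summable (g i)) → Summable fun y : Fin N → β => ∏ i, g i (y i)
  | 0, _, _, _ => Summable.of_finite
  | N + 1, g, hg0, hg => by
    have ih := summable_fin_prod_of_nonneg (fun i => g i.succ) (fun i => hg0 i.succ)
      (fun i => hg i.succ)
    refine (Fin.consEquiv fun _ : Fin (N + 1) => β).summable_iff.1 ?_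
    refine ((hg 0).mul_of_nonneg ih (hg0 0) fun y => prod_nonneg fun i _ => hg0 i.succ (y i)).congr
      fun p => ?_
    simp [Fin.consEquiv, Fin.prod_univ_succ]

lemma summable_mul_of_abs_le {ι : Type*} {f g : ι → ℝ} {C : ℝ} (hf : ∀ x, |f x| ≤ C)
    (hg : Summable g) (hg0 : ∀ x, 0 ≤ g x) : Summable fun x => f x * g x :=
  (hg.mul_left C).of_norm_bounded fun x => by
    rw [Real.norm_eq_abs, abs_mul, abs_of_nonneg (hg0 x)]
    exact mul_le_mul_of_nonneg_right (hf x) (hg0 x)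

lemma tsum_sum_mul {ι κ : Type*} (s : Finset κ) (a : κ → ι → ℝ) (w : ι → ℝ)
    (h : ∀ k ∈ s, Summable fun x => a k x * w x) :
    ∑' x, (∑ k ∈ s, a k x) * w x = ∑ k ∈ s, ∑' x, a k x * w x := by
  simp_rw [sum_mul]
  exact Summable.tsum_finsetSum h

section PoissonWeight

variable {N : ℕ} (μ : Fin N → ℝ) (i : Fin N)

lemma poissonWeight_nonneg (hμ : ∀ j, 0 ≤ μ j) (y : Fin N → ℕ) : 0 ≤ poissonWeight μ y :=
  prod_nonneg fun j _ => poissonPMF_nonneg (hμ j) _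

lemma summable_poissonWeight (hμ : ∀ j, 0 ≤ μ j) : Summable (poissonWeight μ) :=
  summable_fin_prod_of_nonneg _ (fun j => poissonPMF_nonneg (hμ j)) fun _ => summable_poissonPMF _

lemma poissonWeight_update (y : Fin N → ℕ) (k : ℕ) :
    poissonWeight μ (update y i k)
      = poissonPMF (μ i) k * ∏ j ∈ univ.erase i, poissonPMF (μ j) (y j) := by
  rw [poissonWeight, ← mul_prod_erase univ _ (mem_univ i), update_self]
  congr 1
  exact prod_congr rfl fun j hj => by rw [update_of_ne (ne_of_mem_erase hj)]

lemma succ_mul_poissonWeight_update_succ (y : Fin N → ℕ) :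
    ((y i : ℝ) + 1) * poissonWeight μ (update y i (y i + 1)) = μ i * poissonWeight μ y := by
  conv_rhs => rw [← update_eq_self i y]
  rw [poissonWeight_update, poissonWeight_update, ← mul_assoc, succ_mul_poissonPMF_succ, mul_assoc]

lemma update_succ_injective : Injective fun y : Fin N → ℕ => update y i (y i + 1) :=
  LeftInverse.injective (g := fun z => update z i (z i - 1)) fun y => by simp

lemma coord_mul_update_pred_comp_update_succ (F : (Fin N → ℕ) → ℝ) (y : Fin N → ℕ) :
    let z := update y i (y i + 1)
    (z i : ℝ) * F (update z i (z i - 1)) * poissonWeight μ z = μ i * F y * poissonWeight μ y := by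
  simp only [update_self, update_idem, Nat.add_sub_cancel, update_eq_self, Nat.cast_succ]
  linear_combination F y * succ_mul_poissonWeight_update_succ μ i y

lemma support_coord_mul_subset_range_update_succ (F : (Fin N → ℕ) → ℝ) :
    support (fun y : Fin N → ℕ => (y i : ℝ) * F (update y i (y i - 1)) * poissonWeight μ y)
      ⊆ Set.range fun y : Fin N → ℕ => update y i (y i + 1) := by
  intro y hy
  have hyi : y i ≠ 0 := fun h0 => hy (by simp [h0])
  exact ⟨update y i (y i - 1), by simp [Nat.sub_add_cancel (Nat.one_le_iff_ne_zero.2 hyi)]⟩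

lemma tsum_coord_mul_update_pred (F : (Fin N → ℕ) → ℝ) :
    ∑' y : Fin N → ℕ, (y i : ℝ) * F (update y i (y i - 1)) * poissonWeight μ y
      = ∑' y : Fin N → ℕ, μ i * F y * poissonWeight μ y := by
  rw [← (update_succ_injective i).tsum_eq (support_coord_mul_subset_range_update_succ μ i F)]
  exact tsum_congr (coord_mul_update_pred_comp_update_succ μ i F)

lemma summable_coord_mul_update_pred_iff (F : (Fin N → ℕ) → ℝ) :
    Summable (fun y : Fin N → ℕ => (y i : ℝ) * F (update y i (y i - 1)) * poissonWeight μ y)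
      ↔ Summable fun y : Fin N → ℕ => μ i * F y * poissonWeight μ y := by
  rw [← (update_succ_injective i).summable_iff fun y hy =>
    by_contra fun h => hy (support_coord_mul_subset_range_update_succ μ i F h)]
  exact summable_congr (coord_mul_update_pred_comp_update_succ μ i F)

variable {μ} (hμ : ∀ j, 0 ≤ μ j) {f : (Fin N → ℕ) → ℝ} {C : ℝ} (hf : ∀ y, |f y| ≤ C)
include hμ hf

lemma summable_const_mul_poissonWeight (c : ℝ) :
    Summable fun y : Fin N → ℕ => c * f y * poissonWeight μ y := by
  simpa only [mul_assoc] using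
    (summable_mul_of_abs_le hf (summable_poissonWeight μ hμ) (poissonWeight_nonneg μ hμ)).mul_left c

lemma summable_coord_mul_update_pred :
    Summable fun y : Fin N → ℕ => (y i : ℝ) * f (update y i (y i - 1)) * poissonWeight μ y :=
  (summable_coord_mul_update_pred_iff μ i f).2 (summable_const_mul_poissonWeight hμ hf _)

lemma summable_coord_mul :
    Summable fun y : Fin N → ℕ => (y i : ℝ) * f y * poissonWeight μ y := by
  have hcoord : Summable fun y : Fin N → ℕ => (y i : ℝ) * poissonWeight μ y := by
    simpa using summable_coord_mul_update_pred (f := fun _ => 1) i hμ (C := 1) (by simp)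
  refine (summable_mul_of_abs_le hf hcoord fun y =>
    mul_nonneg (Nat.cast_nonneg _) (poissonWeight_nonneg μ hμ y)).congr fun y => ?_
  ring

lemma summable_coord_mul_sub_update_pred :
    Summable fun y : Fin N → ℕ =>
      (y i : ℝ) * (f y - f (update y i (y i - 1))) * poissonWeight μ y :=
  ((summable_coord_mul i hμ hf).sub (summable_coord_mul_update_pred i hμ hf)).congr fun y => by
    ring

lemma tsum_coord_mul_sub_tsum_const_mul :
    ∑' y : Fin N → ℕ, (y i : ℝ) * f y * poissonWeight μ y
        - ∑' y : Fin N → ℕ, μ i * f y * poissonWeight μ y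
      = ∑' y : Fin N → ℕ, (y i : ℝ) * (f y - f (update y i (y i - 1))) * poissonWeight μ y := by
  rw [← tsum_coord_mul_update_pred μ i f,
    ← (summable_coord_mul i hμ hf).tsum_sub (summable_coord_mul_update_pred i hμ hf)]
  exact tsum_congr fun y => by ring

end PoissonWeight

theorem optimism_identity_and_positivity {N : ℕ} (μ : Fin N → ℝ) (hμ : ∀ i, 0 < μ i)
    (h : Fin N → (Fin N → ℕ) → ℝ) (hbdd : ∀ i, ∃ C : ℝ, ∀ y, |h i y| ≤ C) :
    ((∑' y : Fin N → ℕ, (∑ i, (y i : ℝ) * h i y) * poissonWeight μ y)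
        - ∑' y : Fin N → ℕ, (∑ i, μ i * h i y) * poissonWeight μ y
      = ∑' y : Fin N → ℕ,
          (∑ i, (y i : ℝ) * (h i y - h i (Function.update y i (y i - 1)))) *
            poissonWeight μ y)
    ∧ ((∀ i (y : Fin N → ℕ) (k l : ℕ), k ≤ l →
          h i (Function.update y i k) ≤ h i (Function.update y i l)) →
        0 ≤ ∑' y : Fin N → ℕ,
            (∑ i, (y i : ℝ) * (h i y - h i (Function.update y i (y i - 1)))) *
              poissonWeight μ y) := by
  have hμ₀ : ∀ i, 0 ≤ μ i := fun i => (hμ i).le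
  choose C hC using hbdd
  refine ⟨?_, fun hmono => ?_⟩
  · rw [tsum_sum_mul _ _ _ fun i _ => summable_coord_mul i hμ₀ (hC i),
      tsum_sum_mul _ _ _ fun i _ => summable_const_mul_poissonWeight hμ₀ (hC i) (μ i),
      tsum_sum_mul _ _ _ fun i _ => summable_coord_mul_sub_update_pred i hμ₀ (hC i),
      ← sum_sub_distrib]
    exact sum_congr rfl fun i _ => tsum_coord_mul_sub_tsum_const_mul i hμ₀ (hC i)
  · refine tsum_nonneg fun y => mul_nonneg (sum_nonneg fun i _ => ?_) (poissonWeight_nonneg μ hμ₀ y)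
    refine mul_nonneg (Nat.cast_nonneg _) (sub_nonneg.2 ?_)
    simpa only [update_eq_self] using hmono i y (y i - 1) (y i) (Nat.sub_le _ _)
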